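/- arXiv:1409.4170 — 2 statements merged into one kernel-verified Lean document; each statement's English description precedes it below -/
import Mathlib

section
/- With ν₀ and m₀ as above, let k ⊂ so(n+1) be the subalgebra of matrices with vanishing last row and column, let h be the centralizer of ν₀ in k, let p be the orthogonal complement of h in k, and let n = k ∩ p. Then the map ad(ν₀) : m₀ → n is a linear isomorphism, with inverse −ad(ν₀). -/
open Matrix

/-- The element `ν₀ ∈ so(n+1)` with `(ν₀)_{n,n+1} = 1 = −(ν₀)_{n+1,n}` (1-indexed). -/
def nu0 (n : ℕ) : Matrix (Fin (n + 1)) (Fin (n + 1)) ℝ :=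
  Matrix.of fun i j =>
    if i.val = n - 1 ∧ j.val = n then (1 : ℝ)
    else if i.val = n ∧ j.val = n - 1 then (-1 : ℝ) else 0

/-- The inner product `⟨η, ζ⟩ = −(1/2) tr (η ζ)` on `so(n+1)`. -/
noncomputable def ip {n : ℕ} (η ζ : Matrix (Fin (n + 1)) (Fin (n + 1)) ℝ) : ℝ :=
  -(1 / 2 : ℝ) * (η * ζ).trace

/-- Membership in `k ≅ so(n)`: skew-symmetric with vanishing last row and column. -/
def InK (n : ℕ) (η : Matrix (Fin (n + 1)) (Fin (n + 1)) ℝ) : Prop :=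
  ηᵀ = -η ∧ ∀ i j : Fin (n + 1), (i.val = n ∨ j.val = n) → η i j = 0

/-- Membership in `h`, the centralizer of `ν₀` in `k`. -/
def InH (n : ℕ) (η : Matrix (Fin (n + 1)) (Fin (n + 1)) ℝ) : Prop :=
  InK n η ∧ η * nu0 n = nu0 n * η

/-- Membership in `n = k ∩ p = k ∩ h^⊥`. -/
def InN (n : ℕ) (η : Matrix (Fin (n + 1)) (Fin (n + 1)) ℝ) : Prop :=
  InK n η ∧ ∀ ζ, InH n ζ → ip η ζ = 0

/-- Membership in `m = k^⊥ ∩ so(n+1)`: skew with nonzero entries only in the last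
row and column. -/
def InM (n : ℕ) (ξ : Matrix (Fin (n + 1)) (Fin (n + 1)) ℝ) : Prop :=
  ξᵀ = -ξ ∧ ∀ i j : Fin (n + 1), i.val < n → j.val < n → ξ i j = 0

/-- Membership in `m₀ = m ∩ (ℝν₀)^⊥`. -/
def InM0 (n : ℕ) (ξ : Matrix (Fin (n + 1)) (Fin (n + 1)) ℝ) : Prop :=
  InM n ξ ∧ ip ξ (nu0 n) = 0

def lastIdx (n : ℕ) : Fin (n + 1) := ⟨n, Nat.lt_succ_self n⟩
def prevIdx (n : ℕ) : Fin (n + 1) := ⟨n - 1, by omega⟩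

lemma prev_ne_last {n : ℕ} (hn : 1 ≤ n) : prevIdx n ≠ lastIdx n := by
  simp only [prevIdx, lastIdx, ne_eq, Fin.mk.injEq]
  omega

lemma nu0_apply_PL (n : ℕ) : nu0 n (prevIdx n) (lastIdx n) = 1 := by
  show (if n - 1 = n - 1 ∧ n = n then (1 : ℝ)
    else if n - 1 = n ∧ n = n - 1 then (-1 : ℝ) else 0) = 1
  rw [if_pos ⟨rfl, rfl⟩]

lemma nu0_apply_LP {n : ℕ} (hn : 1 ≤ n) : nu0 n (lastIdx n) (prevIdx n) = -1 := by
  show (if n = n - 1 ∧ n - 1 = n then (1 : ℝ)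
    else if n = n ∧ n - 1 = n - 1 then (-1 : ℝ) else 0) = -1
  rw [if_neg (by omega), if_pos ⟨rfl, rfl⟩]

lemma nu0_apply_ne {n : ℕ} (hn : 1 ≤ n) {i j : Fin (n + 1)}
    (h : ¬(i = prevIdx n ∧ j = lastIdx n)) (h' : ¬(i = lastIdx n ∧ j = prevIdx n)) :
    nu0 n i j = 0 := by
  have h2 : ¬(i.val = n - 1 ∧ j.val = n) := fun hc => h ⟨Fin.ext hc.1, Fin.ext hc.2⟩
  have h3 : ¬(i.val = n ∧ j.val = n - 1) := fun hc => h' ⟨Fin.ext hc.1, Fin.ext hc.2⟩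
  show (if i.val = n - 1 ∧ j.val = n then (1 : ℝ)
    else if i.val = n ∧ j.val = n - 1 then (-1 : ℝ) else 0) = 0
  rw [if_neg h2, if_neg h3]

lemma nu0_transpose {n : ℕ} (hn : 1 ≤ n) : (nu0 n)ᵀ = -nu0 n := by
  ext i j
  simp only [transpose_apply, Matrix.neg_apply]
  by_cases h1 : i = prevIdx n ∧ j = lastIdx n
  · rw [h1.1, h1.2, nu0_apply_LP hn, nu0_apply_PL]
  · by_cases h2 : i = lastIdx n ∧ j = prevIdx n
    · rw [h2.1, h2.2, nu0_apply_PL, nu0_apply_LP hn]; ring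
    · rw [nu0_apply_ne hn (fun hc => h2 ⟨hc.2, hc.1⟩) (fun hc => h1 ⟨hc.2, hc.1⟩),
        nu0_apply_ne hn h1 h2]; ring

lemma nu0_mul_apply {n : ℕ} (hn : 1 ≤ n) (A : Matrix (Fin (n + 1)) (Fin (n + 1)) ℝ)
    (i j : Fin (n + 1)) :
    (nu0 n * A) i j =
      (if i = prevIdx n then A (lastIdx n) j else 0) -
      (if i = lastIdx n then A (prevIdx n) j else 0) := by
  rw [Matrix.mul_apply]
  have h1 : ∀ k : Fin (n + 1), nu0 n i k * A k j =
      (if k = lastIdx n then (if i = prevIdx n then A (lastIdx n) j else 0) else 0) -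
      (if k = prevIdx n then (if i = lastIdx n then A (prevIdx n) j else 0) else 0) := by
    intro k
    rcases eq_or_ne k (lastIdx n) with hk | hk
    · subst hk
      rw [if_pos rfl, if_neg (Ne.symm (prev_ne_last hn))]
      rcases eq_or_ne i (prevIdx n) with hi | hi
      · subst hi; rw [nu0_apply_PL, if_pos rfl]; ring
      · rw [nu0_apply_ne hn (fun hc => hi hc.1) (fun hc => prev_ne_last hn hc.2.symm),
          if_neg hi]; ring
    · rw [if_neg hk]
      rcases eq_or_ne k (prevIdx n) with hk' | hk'
      · subst hk'
        rw [if_pos rfl]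
        rcases eq_or_ne i (lastIdx n) with hi | hi
        · subst hi; rw [nu0_apply_LP hn, if_pos rfl]; ring
        · rw [nu0_apply_ne hn (fun hc => prev_ne_last hn hc.2) (fun hc => hi hc.1),
            if_neg hi]; ring
      · rw [if_neg hk', nu0_apply_ne hn (fun hc => hk hc.2) (fun hc => hk' hc.2)]; ring
  rw [Finset.sum_congr rfl (fun k _ => h1 k), Finset.sum_sub_distrib,
    Finset.sum_ite_eq', Finset.sum_ite_eq']
  simp

lemma mul_nu0_apply {n : ℕ} (hn : 1 ≤ n) (A : Matrix (Fin (n + 1)) (Fin (n + 1)) ℝ)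
    (i j : Fin (n + 1)) :
    (A * nu0 n) i j =
      (if j = lastIdx n then A i (prevIdx n) else 0) -
      (if j = prevIdx n then A i (lastIdx n) else 0) := by
  rw [Matrix.mul_apply]
  have h1 : ∀ k : Fin (n + 1), A i k * nu0 n k j =
      (if k = prevIdx n then (if j = lastIdx n then A i (prevIdx n) else 0) else 0) -
      (if k = lastIdx n then (if j = prevIdx n then A i (lastIdx n) else 0) else 0) := by
    intro k
    rcases eq_or_ne k (prevIdx n) with hk | hk
    · subst hk
      rw [if_pos rfl, if_neg (prev_ne_last hn)]
      rcases eq_or_ne j (lastIdx n) with hj | hj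
      · subst hj; rw [nu0_apply_PL, if_pos rfl]; ring
      · rw [nu0_apply_ne hn (fun hc => hj hc.2) (fun hc => prev_ne_last hn hc.1),
          if_neg hj]; ring
    · rw [if_neg hk]
      rcases eq_or_ne k (lastIdx n) with hk' | hk'
      · subst hk'
        rw [if_pos rfl]
        rcases eq_or_ne j (prevIdx n) with hj | hj
        · subst hj; rw [nu0_apply_LP hn, if_pos rfl]; ring
        · rw [nu0_apply_ne hn (fun hc => prev_ne_last hn hc.1.symm) (fun hc => hj hc.2),
            if_neg hj]; ring
      · rw [if_neg hk', nu0_apply_ne hn (fun hc => hk hc.1) (fun hc => hk' hc.1)]; ring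
  rw [Finset.sum_congr rfl (fun k _ => h1 k), Finset.sum_sub_distrib,
    Finset.sum_ite_eq', Finset.sum_ite_eq']
  simp


lemma lastIdx_val (n : ℕ) : (lastIdx n).val = n := rfl
lemma prevIdx_val (n : ℕ) : (prevIdx n).val = n - 1 := rfl

lemma skew_diag {n : ℕ} {A : Matrix (Fin (n + 1)) (Fin (n + 1)) ℝ}
    (hA : Aᵀ = -A) (i : Fin (n + 1)) : A i i = 0 := by
  have := congrFun (congrFun hA i) i
  simp only [transpose_apply, Matrix.neg_apply] at this
  linarith

lemma skew_apply {n : ℕ} {A : Matrix (Fin (n + 1)) (Fin (n + 1)) ℝ}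
    (hA : Aᵀ = -A) (i j : Fin (n + 1)) : A j i = -A i j := by
  have := congrFun (congrFun hA i) j
  simpa [transpose_apply] using this

lemma comm_skew {n : ℕ} (hn : 1 ≤ n) (A : Matrix (Fin (n + 1)) (Fin (n + 1)) ℝ)
    (hA : Aᵀ = -A) :
    (nu0 n * A - A * nu0 n)ᵀ = -(nu0 n * A - A * nu0 n) := by
  rw [transpose_sub, transpose_mul, transpose_mul, hA, nu0_transpose hn]
  noncomm_ring

lemma trace_mul_eq {m : ℕ} (A B : Matrix (Fin m) (Fin m) ℝ) :
    (A * B).trace = ∑ i, ∑ j, A i j * B j i := by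
  simp [Matrix.trace, Matrix.mul_apply, Matrix.diag]

lemma trace_mul_nu0 {n : ℕ} (hn : 1 ≤ n) (A : Matrix (Fin (n + 1)) (Fin (n + 1)) ℝ) :
    (A * nu0 n).trace = A (lastIdx n) (prevIdx n) - A (prevIdx n) (lastIdx n) := by
  have h : ∀ i : Fin (n + 1), (A * nu0 n) i i =
      (if i = lastIdx n then A (lastIdx n) (prevIdx n) else 0) -
      (if i = prevIdx n then A (prevIdx n) (lastIdx n) else 0) := by
    intro i
    rw [mul_nu0_apply hn]
    rcases eq_or_ne i (lastIdx n) with h | h <;> rcases eq_or_ne i (prevIdx n) with h' | h' <;>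
      simp_all
  rw [Matrix.trace]
  simp only [Matrix.diag]
  rw [Finset.sum_congr rfl (fun i _ => h i), Finset.sum_sub_distrib,
    Finset.sum_ite_eq', Finset.sum_ite_eq']
  simp

lemma ip_nu0 {n : ℕ} (hn : 1 ≤ n) {A : Matrix (Fin (n + 1)) (Fin (n + 1)) ℝ}
    (hA : Aᵀ = -A) : ip A (nu0 n) = -A (lastIdx n) (prevIdx n) := by
  rw [ip, trace_mul_nu0 hn, skew_apply hA (lastIdx n) (prevIdx n)]
  ring

lemma h_col {n : ℕ} (hn : 1 ≤ n) {ζ : Matrix (Fin (n + 1)) (Fin (n + 1)) ℝ}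
    (hζ : InH n ζ) (i : Fin (n + 1)) : ζ i (prevIdx n) = 0 := by
  obtain ⟨⟨hsk, hz⟩, hc⟩ := hζ
  have h1 := congrFun (congrFun hc i) (lastIdx n)
  rw [mul_nu0_apply hn, nu0_mul_apply hn] at h1
  have hLL : ζ (lastIdx n) (lastIdx n) = 0 := hz _ _ (Or.inl rfl)
  have hPL : ζ (prevIdx n) (lastIdx n) = 0 := hz _ _ (Or.inr rfl)
  have hne := prev_ne_last hn
  rw [if_pos rfl, if_neg (Ne.symm hne)] at h1
  rcases eq_or_ne i (prevIdx n) with h | h <;> rcases eq_or_ne i (lastIdx n) with h' | h' <;>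
    simp_all

lemma h_row {n : ℕ} (hn : 1 ≤ n) {ζ : Matrix (Fin (n + 1)) (Fin (n + 1)) ℝ}
    (hζ : InH n ζ) (i : Fin (n + 1)) : ζ (prevIdx n) i = 0 := by
  rw [skew_apply hζ.1.1, h_col hn hζ, neg_zero]

lemma inM0_col {n : ℕ} (hn : 1 ≤ n) {ξ : Matrix (Fin (n + 1)) (Fin (n + 1)) ℝ}
    (h : InM0 n ξ) (i : Fin (n + 1)) : ξ i (prevIdx n) = 0 := by
  obtain ⟨⟨hsk, hblk⟩, hip⟩ := h
  have hNM : ξ (lastIdx n) (prevIdx n) = 0 := by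
    rw [ip_nu0 hn hsk] at hip; linarith
  by_cases hi : i.val = n
  · have hx : i = lastIdx n := Fin.ext hi
    rw [hx]; exact hNM
  · exact hblk i _ (by omega) (show n - 1 < n by omega)

lemma inM0_row {n : ℕ} (hn : 1 ≤ n) {ξ : Matrix (Fin (n + 1)) (Fin (n + 1)) ℝ}
    (h : InM0 n ξ) (j : Fin (n + 1)) : ξ (prevIdx n) j = 0 := by
  rw [skew_apply h.1.1, inM0_col hn h, neg_zero]

lemma ad_m0_apply {n : ℕ} (hn : 1 ≤ n) {ξ : Matrix (Fin (n + 1)) (Fin (n + 1)) ℝ}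
    (hξ : InM0 n ξ) (a b : Fin (n + 1)) :
    (nu0 n * ξ - ξ * nu0 n) a b =
      (if a = prevIdx n then ξ (lastIdx n) b else 0) +
      (if b = prevIdx n then ξ a (lastIdx n) else 0) := by
  rw [Matrix.sub_apply, nu0_mul_apply hn, mul_nu0_apply hn, inM0_row hn hξ b, inM0_col hn hξ a]
  simp only [ite_self]
  ring

lemma ad_k_apply {n : ℕ} (hn : 1 ≤ n) {η : Matrix (Fin (n + 1)) (Fin (n + 1)) ℝ}
    (hη : InK n η) (a b : Fin (n + 1)) :
    (nu0 n * η - η * nu0 n) a b =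
      -(if a = lastIdx n then η (prevIdx n) b else 0) -
      (if b = lastIdx n then η a (prevIdx n) else 0) := by
  rw [Matrix.sub_apply, nu0_mul_apply hn, mul_nu0_apply hn, hη.2 (lastIdx n) b (Or.inl rfl),
    hη.2 a (lastIdx n) (Or.inr rfl)]
  simp only [ite_self]
  ring

/-- The elementary skew matrix `E_{ij} - E_{ji}`. -/
def esk {m : ℕ} (i j : Fin m) : Matrix (Fin m) (Fin m) ℝ :=
  Matrix.of fun a b => if a = i ∧ b = j then 1 else if a = j ∧ b = i then -1 else 0

lemma esk_apply_ne {m : ℕ} {i j a b : Fin m} (h1 : ¬(a = i ∧ b = j)) (h2 : ¬(a = j ∧ b = i)) :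
    esk i j a b = 0 := by
  show (if a = i ∧ b = j then (1 : ℝ) else if a = j ∧ b = i then -1 else 0) = 0
  rw [if_neg h1, if_neg h2]

lemma esk_apply_ij {m : ℕ} {i j : Fin m} : esk i j i j = 1 := by
  show (if i = i ∧ j = j then (1 : ℝ) else if i = j ∧ j = i then -1 else 0) = 1
  rw [if_pos ⟨rfl, rfl⟩]

lemma esk_apply_ji {m : ℕ} {i j : Fin m} (hij : i ≠ j) : esk i j j i = -1 := by
  show (if j = i ∧ i = j then (1 : ℝ) else if j = j ∧ i = i then -1 else 0) = -1
  rw [if_neg (fun hc => hij hc.2), if_pos ⟨rfl, rfl⟩]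

lemma esk_transpose {m : ℕ} {i j : Fin m} (hij : i ≠ j) : (esk i j)ᵀ = -esk i j := by
  ext a b
  simp only [transpose_apply, Matrix.neg_apply]
  by_cases h1 : a = i ∧ b = j
  · rw [h1.1, h1.2, esk_apply_ji hij, esk_apply_ij]
  · by_cases h2 : a = j ∧ b = i
    · rw [h2.1, h2.2, esk_apply_ij, esk_apply_ji hij]; ring
    · rw [esk_apply_ne (fun hc => h2 ⟨hc.2, hc.1⟩) (fun hc => h1 ⟨hc.2, hc.1⟩),
        esk_apply_ne h1 h2]; ring

lemma trace_mul_esk {m : ℕ} {i j : Fin m} (hij : i ≠ j)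
    (A : Matrix (Fin m) (Fin m) ℝ) :
    (A * esk i j).trace = A j i - A i j := by
  have h : ∀ a b : Fin m, A a b * esk i j b a =
      (if b = i then (if a = j then A a b else 0) else 0) -
      (if b = j then (if a = i then A a b else 0) else 0) := by
    intro a b
    by_cases h1 : b = i ∧ a = j
    · rw [h1.1, h1.2]
      simp [esk_apply_ij, hij]
    · by_cases h2 : b = j ∧ a = i
      · rw [h2.1, h2.2]
        simp [esk_apply_ji hij, hij, Ne.symm hij]
      · have e1 : (if b = i then (if a = j then A a b else 0) else 0) = 0 := by
          by_cases hb : b = i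
          · rw [if_pos hb, if_neg (fun ha => h1 ⟨hb, ha⟩)]
          · rw [if_neg hb]
        have e2 : (if b = j then (if a = i then A a b else 0) else 0) = 0 := by
          by_cases hb : b = j
          · rw [if_pos hb, if_neg (fun ha => h2 ⟨hb, ha⟩)]
          · rw [if_neg hb]
        rw [esk_apply_ne h1 h2, mul_zero, e1, e2, sub_zero]
  have h2 : ∀ a : Fin m, ∑ b, A a b * esk i j b a =
      (if a = j then A a i else 0) - (if a = i then A a j else 0) := by
    intro a
    rw [Finset.sum_congr rfl (fun b _ => h a b), Finset.sum_sub_distrib,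
      Finset.sum_ite_eq', Finset.sum_ite_eq']
    simp
  rw [trace_mul_eq, Finset.sum_congr rfl (fun a _ => h2 a), Finset.sum_sub_distrib,
    Finset.sum_ite_eq', Finset.sum_ite_eq']
  simp

lemma inN_entry {n : ℕ} (hn : 1 ≤ n) {η : Matrix (Fin (n + 1)) (Fin (n + 1)) ℝ}
    (hη : InN n η) {i j : Fin (n + 1)} (hi : i ≠ prevIdx n) (hj : j ≠ prevIdx n) :
    η i j = 0 := by
  obtain ⟨⟨hsk, hz⟩, horth⟩ := hη
  by_cases hiN : i.val = n
  · exact hz i j (Or.inl hiN)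
  by_cases hjN : j.val = n
  · exact hz i j (Or.inr hjN)
  rcases eq_or_ne i j with rfl | hij
  · exact skew_diag hsk i
  have hiL : i ≠ lastIdx n := fun h => hiN (by rw [h, lastIdx_val])
  have hjL : j ≠ lastIdx n := fun h => hjN (by rw [h, lastIdx_val])
  have heP : ∀ a, esk i j a (prevIdx n) = 0 :=
    fun a => esk_apply_ne (fun hc => hj hc.2.symm) (fun hc => hi hc.2.symm)
  have heL : ∀ a, esk i j a (lastIdx n) = 0 :=
    fun a => esk_apply_ne (fun hc => hjL hc.2.symm) (fun hc => hiL hc.2.symm)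
  have hePr : ∀ b, esk i j (prevIdx n) b = 0 :=
    fun b => esk_apply_ne (fun hc => hi hc.1.symm) (fun hc => hj hc.1.symm)
  have heLr : ∀ b, esk i j (lastIdx n) b = 0 :=
    fun b => esk_apply_ne (fun hc => hiL hc.1.symm) (fun hc => hjL hc.1.symm)
  have hH : InH n (esk i j) := by
    refine ⟨⟨esk_transpose hij, ?_⟩, ?_⟩
    · intro a b hab
      refine esk_apply_ne (fun hc => ?_) (fun hc => ?_)
      · rcases hab with h | h
        · exact hiN (by rw [← hc.1]; exact h)
        · exact hjN (by rw [← hc.2]; exact h)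
      · rcases hab with h | h
        · exact hjN (by rw [← hc.1]; exact h)
        · exact hiN (by rw [← hc.2]; exact h)
    · ext a b
      rw [mul_nu0_apply hn, nu0_mul_apply hn, heP a, heL a, hePr b, heLr b]
      simp
  have h0 := horth (esk i j) hH
  rw [ip, trace_mul_esk hij, skew_apply hsk i j] at h0
  have : (-(1 / 2) : ℝ) * (-η i j - η i j) = η i j := by ring
  rw [this] at h0
  exact h0

/-- `ad(ν₀) : m₀ → n` is a linear isomorphism with inverse `−ad(ν₀)`:
it maps `m₀` into `n`, maps `n` into `m₀`, and `(ad ν₀)² = −Id` on both. -/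
theorem ad_nu0_m0_to_n_iso (n : ℕ) (hn : 1 ≤ n) :
    (∀ ξ, InM0 n ξ → InN n (nu0 n * ξ - ξ * nu0 n)) ∧
    (∀ η, InN n η → InM0 n (nu0 n * η - η * nu0 n)) ∧
    (∀ ξ, InM0 n ξ →
      nu0 n * (nu0 n * ξ - ξ * nu0 n) - (nu0 n * ξ - ξ * nu0 n) * nu0 n = -ξ) ∧
    (∀ η, InN n η →
      nu0 n * (nu0 n * η - η * nu0 n) - (nu0 n * η - η * nu0 n) * nu0 n = -η) := by
  refine ⟨?_, ?_, ?_, ?_⟩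
  · -- `ad ν₀` maps `m₀` into `n`
    intro ξ hξ
    have hsk := hξ.1.1
    refine ⟨⟨comm_skew hn ξ hsk, ?_⟩, ?_⟩
    · intro i j hij
      rw [ad_m0_apply hn hξ]
      rcases hij with hi | hj
      · have hiL : i = lastIdx n := Fin.ext hi
        subst hiL
        rw [if_neg (Ne.symm (prev_ne_last hn)), skew_diag hsk]
        simp
      · have hjL : j = lastIdx n := Fin.ext hj
        subst hjL
        rw [if_neg (Ne.symm (prev_ne_last hn)), skew_diag hsk]
        simp
    · intro ζ hζ
      rw [ip]
      have ht : ((nu0 n * ξ - ξ * nu0 n) * ζ).trace = 0 := by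
        rw [trace_mul_eq]
        refine Finset.sum_eq_zero fun a _ => Finset.sum_eq_zero fun b _ => ?_
        rcases eq_or_ne a (prevIdx n) with rfl | ha
        · rw [h_col hn hζ b, mul_zero]
        · rcases eq_or_ne b (prevIdx n) with rfl | hb
          · rw [h_row hn hζ a, mul_zero]
          · rw [ad_m0_apply hn hξ, if_neg ha, if_neg hb]; simp
      rw [ht, mul_zero]
  · -- `ad ν₀` maps `n` into `m₀`
    intro η hη
    obtain ⟨⟨hsk, hz⟩, -⟩ := hη
    have hK : InK n η := ⟨hsk, hz⟩
    refine ⟨⟨comm_skew hn η hsk, ?_⟩, ?_⟩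
    · intro i j hi hj
      have hiL : i ≠ lastIdx n := fun h => by rw [h, lastIdx_val] at hi; omega
      have hjL : j ≠ lastIdx n := fun h => by rw [h, lastIdx_val] at hj; omega
      rw [ad_k_apply hn hK, if_neg hiL, if_neg hjL]
      simp
    · rw [ip_nu0 hn (comm_skew hn η hsk), ad_k_apply hn hK, if_pos rfl,
        if_neg (prev_ne_last hn), skew_diag hsk]
      simp
  · -- `(ad ν₀)² = -Id` on `m₀`
    intro ξ hξ
    have hsk := hξ.1.1
    have hblk := hξ.1.2
    have hBL : ∀ b, (nu0 n * ξ - ξ * nu0 n) (lastIdx n) b = 0 := by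
      intro b
      rw [ad_m0_apply hn hξ, if_neg (Ne.symm (prev_ne_last hn)), skew_diag hsk]
      simp
    have hBP : ∀ b, (nu0 n * ξ - ξ * nu0 n) (prevIdx n) b = ξ (lastIdx n) b := by
      intro b
      rw [ad_m0_apply hn hξ, if_pos rfl, inM0_row hn hξ (lastIdx n)]
      simp
    have hBcP : ∀ a, (nu0 n * ξ - ξ * nu0 n) a (prevIdx n) = ξ a (lastIdx n) := by
      intro a
      rw [ad_m0_apply hn hξ, if_pos rfl, inM0_col hn hξ (lastIdx n)]
      simp
    have hBcL : ∀ a, (nu0 n * ξ - ξ * nu0 n) a (lastIdx n) = 0 := by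
      intro a
      rw [ad_m0_apply hn hξ, if_neg (Ne.symm (prev_ne_last hn)), skew_diag hsk]
      simp
    ext i j
    rw [Matrix.sub_apply, nu0_mul_apply hn, mul_nu0_apply hn, hBL j, hBP j, hBcP i, hBcL i,
      Matrix.neg_apply]
    simp only [ite_self]
    rcases eq_or_ne i (lastIdx n) with rfl | hi
    · rcases eq_or_ne j (lastIdx n) with rfl | hj
      · rw [if_pos rfl, skew_diag hsk]; simp
      · rw [if_pos rfl, if_neg hj]; ring
    · rcases eq_or_ne j (lastIdx n) with rfl | hj
      · rw [if_neg hi, if_pos rfl]; ring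
      · have hi' : i.val ≠ n := fun h => hi (Fin.ext h)
        have hj' : j.val ≠ n := fun h => hj (Fin.ext h)
        rw [if_neg hi, if_neg hj, hblk i j (by omega) (by omega)]
        simp
  · -- `(ad ν₀)² = -Id` on `n`
    intro η hη
    obtain ⟨⟨hsk, hz⟩, horth⟩ := hη
    have hK : InK n η := ⟨hsk, hz⟩
    have hη' : InN n η := ⟨hK, horth⟩
    have hBL : ∀ b, (nu0 n * η - η * nu0 n) (lastIdx n) b = -η (prevIdx n) b := by
      intro b
      rw [ad_k_apply hn hK, if_pos rfl, hz (lastIdx n) (prevIdx n) (Or.inl rfl)]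
      simp
    have hBP : ∀ b, (nu0 n * η - η * nu0 n) (prevIdx n) b = 0 := by
      intro b
      rw [ad_k_apply hn hK, if_neg (prev_ne_last hn), skew_diag hsk]
      simp
    have hBcP : ∀ a, (nu0 n * η - η * nu0 n) a (prevIdx n) = 0 := by
      intro a
      rw [ad_k_apply hn hK, if_neg (prev_ne_last hn), skew_diag hsk]
      simp
    have hBcL : ∀ a, (nu0 n * η - η * nu0 n) a (lastIdx n) = -η a (prevIdx n) := by
      intro a
      rw [ad_k_apply hn hK, if_pos rfl, hz (prevIdx n) (lastIdx n) (Or.inr rfl)]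
      simp
    ext i j
    rw [Matrix.sub_apply, nu0_mul_apply hn, mul_nu0_apply hn, hBL j, hBP j, hBcP i, hBcL i,
      Matrix.neg_apply]
    simp only [ite_self]
    rcases eq_or_ne i (prevIdx n) with rfl | hi
    · rcases eq_or_ne j (prevIdx n) with rfl | hj
      · rw [if_pos rfl, skew_diag hsk]; simp
      · rw [if_pos rfl, if_neg hj]; ring
    · rcases eq_or_ne j (prevIdx n) with rfl | hj
      · rw [if_neg hi, if_pos rfl]; ring
      · rw [if_neg hi, if_neg hj, inN_entry hn hη' hi hj]
        simp
end

section
/- Let f : M → N be an isometric immersion with shape operator A_f, and suppose f has conformal shape form, i.e., A_f(ξ)² = r(ξ)²·Id on T_pM for every unit normal ξ at p. Then for the metric on the unit normal bundle UM^⊥ induced by the Sasaki metric, in which horizontal vectors Z, W at ξ pair as h(Z,W) = g(Z̄, W̄) + g(A_f(ξ)Z̄, A_f(ξ)W̄), the bundle projection π^⊥ : UM^⊥ → M is horizontally conformal with conformal factor 1/(1 + r(ξ)²): that is, g(dπ^⊥(Z), dπ^⊥(W)) = (1/(1+r(ξ)²))·h(Z,W) for all horizontal Z, W. Conversely, horizontal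 conformality of π^⊥ implies conformal shape form. -/
open RealInnerProductSpace

/-- Pointwise content of Lemma 3.5 / Prop. 4.2 of Gudmundsson–Mo: for a self-adjoint
endomorphism `A` (the shape operator `A_f(ξ)`), the horizontal metric
`h(x, y) = ⟨x, y⟩ + ⟨Ax, Ay⟩` satisfies `g = (1/(1+r²)) h` (horizontal conformality
of `π^⊥` with factor `1/(1+r²)`) precisely when `A² = r² Id` (conformal shape form);
and conversely, horizontal conformality implies conformal shape form. -/
theorem horizontally_conformal_iff_conformal_shape_form
    {V : Type*} [NormedAddCommGroup V] [InnerProductSpace ℝ V]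
    [FiniteDimensional ℝ V] [Nontrivial V]
    (A : V →ₗ[ℝ] V) (hA : ∀ x y : V, ⟪A x, y⟫ = ⟪x, A y⟫) :
    (∀ r : ℝ, A ∘ₗ A = r ^ 2 • (LinearMap.id : V →ₗ[ℝ] V) →
      ∀ x y : V, ⟪x, y⟫ = (1 / (1 + r ^ 2)) * (⟪x, y⟫ + ⟪A x, A y⟫)) ∧
    ((∃ c : ℝ, ∀ x y : V, ⟪x, y⟫ + ⟪A x, A y⟫ = c * ⟪x, y⟫) →
      ∃ r : ℝ, A ∘ₗ A = r ^ 2 • (LinearMap.id : V →ₗ[ℝ] V)) := by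
  constructor
  · intro r hr x y
    have h1 : ⟪A x, A y⟫ = r ^ 2 * ⟪x, y⟫ := by
      have hAy : A (A y) = r ^ 2 • y := by
        have := congrArg (fun T => T y) hr
        simpa using this
      rw [hA, hAy, real_inner_smul_right]
    have hpos : (1 : ℝ) + r ^ 2 ≠ 0 := by positivity
    rw [h1]
    field_simp
  · rintro ⟨c, hc⟩
    have key : ∀ x : V, A (A x) = (c - 1) • x := by
      intro x
      have hz : ∀ y : V, ⟪A (A x) - (c - 1) • x, y⟫ = 0 := by
        intro y
        rw [inner_sub_left, real_inner_smul_left, hA (A x) y]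
        have := hc x y
        linarith
      have h0 := hz (A (A x) - (c - 1) • x)
      exact sub_eq_zero.mp (inner_self_eq_zero.mp h0)
    have hc1 : 1 ≤ c := by
      obtain ⟨x, hx⟩ := exists_ne (0 : V)
      have h1 := hc x x
      have h2 : (0:ℝ) < ⟪x, x⟫ := lt_of_le_of_ne real_inner_self_nonneg (Ne.symm fun h => hx (inner_self_eq_zero.mp h))
      nlinarith [real_inner_self_nonneg (x := A x)]
    refine ⟨Real.sqrt (c - 1), ?_⟩
    ext x
    have : Real.sqrt (c - 1) ^ 2 = c - 1 := Real.sq_sqrt (by linarith)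
    simp [key x, this]
end
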